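/- arXiv:2309.02441 — 2 statements merged into one kernel-verified Lean document; each statement's English description precedes it below -/
import Mathlib

section
/- Let v1,v2,v3,v4 ∈ ℝ² form a convex quadrilateral in counterclockwise cyclic order, let Q be their convex hull, and let p lie in the interior of Q. Then the Wachspress coordinates satisfy ρ1(p)·φ1(p) − ρ2(p)·φ2(p) + ρ3(p)·φ3(p) − ρ4(p)·φ4(p) = 0. -/
/-! The distance from `p` to the line through an edge is twice the area of the triangle that `p`
spans with the edge, divided by the edge length. Hence in `ρᵢ · wᵢ` the two edge lengths and the
two triangle areas `S(p, v_{i-1}, v_i)`, `S(p, v_i, v_{i+1})` cancel, leaving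
`ρᵢ · wᵢ = 4 S(v_{i-1}, v_i, v_{i+1})`; these areas are positive because `p` is interior. The
alternating sum of the four corner areas vanishes, as each diagonal cuts `Q` into two triangles
of total area `|Q|`. -/

open Matrix

/-- Signed area of the triangle `(a,b,c)` in the plane. -/
noncomputable def sArea (a b c : EuclideanSpace ℝ (Fin 2)) : ℝ :=
  ((b 0 - a 0) * (c 1 - a 1) - (b 1 - a 1) * (c 0 - a 0)) / 2

/-- `v` lists the vertices of a convex quadrilateral in counterclockwise cyclic order. -/
def ConvexCCW (v : Fin 4 → EuclideanSpace ℝ (Fin 2)) : Prop :=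
  ∀ i : Fin 4, 0 < sArea (v i) (v (i + 1)) (v (i + 2))

/-- `hdist v i p`: Euclidean distance from `p` to the line through `v i` and `v (i+1)`. -/
noncomputable def hdist (v : Fin 4 → EuclideanSpace ℝ (Fin 2)) (i : Fin 4)
    (p : EuclideanSpace ℝ (Fin 2)) : ℝ :=
  Metric.infDist p (affineSpan ℝ {v i, v (i + 1)} : Set (EuclideanSpace ℝ (Fin 2)))

/-- `ρᵢ(p) = l_{i,i-1} l_{i,i+1} h_{i-1}(p) h_i(p)`. -/
noncomputable def rho (v : Fin 4 → EuclideanSpace ℝ (Fin 2)) (i : Fin 4)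
    (p : EuclideanSpace ℝ (Fin 2)) : ℝ :=
  ‖v i - v (i - 1)‖ * ‖v i - v (i + 1)‖ * hdist v (i - 1) p * hdist v i p

/-- Wachspress weight `wᵢ(p) = S(v_{i-1},v_i,v_{i+1}) / (S(p,v_{i-1},v_i) S(p,v_i,v_{i+1}))`. -/
noncomputable def wWach (v : Fin 4 → EuclideanSpace ℝ (Fin 2)) (i : Fin 4)
    (p : EuclideanSpace ℝ (Fin 2)) : ℝ :=
  sArea (v (i - 1)) (v i) (v (i + 1)) /
    (sArea p (v (i - 1)) (v i) * sArea p (v i) (v (i + 1)))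

/-- Wachspress coordinate `φᵢ(p) = wᵢ(p) / (w₁(p)+w₂(p)+w₃(p)+w₄(p))`. -/
noncomputable def wach (v : Fin 4 → EuclideanSpace ℝ (Fin 2)) (i : Fin 4)
    (p : EuclideanSpace ℝ (Fin 2)) : ℝ :=
  wWach v i p / (wWach v 0 p + wWach v 1 p + wWach v 2 p + wWach v 3 p)

open EuclideanGeometry Topology

lemma two_mul_sArea_sq_add_inner_sq {a b q : EuclideanSpace ℝ (Fin 2)}
    (hq : q ∈ line[ℝ, a, b]) (p : EuclideanSpace ℝ (Fin 2)) :
    (2 * sArea a b p) ^ 2 + inner ℝ (b - a) (p - q) ^ 2 = ‖b - a‖ ^ 2 * ‖p - q‖ ^ 2 := by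
  obtain ⟨t, rfl⟩ := mem_affineSpan_pair_iff_exists_lineMap_eq.1 hq
  simp only [EuclideanSpace.norm_sq_eq, PiLp.inner_apply, Fin.sum_univ_two,
    AffineMap.lineMap_apply, vsub_eq_sub, vadd_eq_add, PiLp.add_apply, PiLp.sub_apply,
    PiLp.smul_apply, smul_eq_mul, Real.norm_eq_abs, sq_abs, RCLike.inner_apply, conj_trivial,
    sArea]
  ring

lemma infDist_affineSpan_pair_mul_norm (a b p : EuclideanSpace ℝ (Fin 2)) :
    Metric.infDist p (line[ℝ, a, b] : Set (EuclideanSpace ℝ (Fin 2))) * ‖b - a‖ =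
      2 * |sArea a b p| := by
  have : Nonempty line[ℝ, a, b] := ⟨⟨a, left_mem_affineSpan_pair ℝ a b⟩⟩
  set q := orthogonalProjection line[ℝ, a, b] p
  have horth : inner ℝ (b - a) (p - q) = 0 :=
    (Submodule.mem_orthogonal _ _).1 (vsub_orthogonalProjection_mem_direction_orthogonal _ p) _
      (by rw [direction_affineSpan]; exact vsub_rev_mem_vectorSpan_pair ℝ a b)
  have hlagrange := two_mul_sArea_sq_add_inner_sq q.2 p
  rw [horth, ← dist_eq_norm p, dist_orthogonalProjection_eq_infDist] at hlagrange
  rw [← sq_eq_sq₀ (mul_nonneg Metric.infDist_nonneg (norm_nonneg _)) (by positivity), mul_pow,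
    mul_pow, sq_abs]
  linarith

lemma sArea_rotate (a b c : EuclideanSpace ℝ (Fin 2)) : sArea a b c = sArea c a b := by
  unfold sArea; ring

lemma sArea_self_left (a c : EuclideanSpace ℝ (Fin 2)) : sArea a a c = 0 := by
  unfold sArea; ring

lemma convex_setOf_sArea_nonneg (a b : EuclideanSpace ℝ (Fin 2)) :
    Convex ℝ {x | 0 ≤ sArea a b x} := by
  intro x hx y hy s t hs ht hst
  have hcomb : sArea a b (s • x + t • y) = s * sArea a b x + t * sArea a b y := by
    simp only [sArea, PiLp.add_apply, PiLp.smul_apply, smul_eq_mul]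
    linear_combination ((b 0 - a 0) * a 1 - (b 1 - a 1) * a 0) / 2 * hst
  simp only [Set.mem_ofPred_eq, hcomb] at hx hy ⊢
  exact add_nonneg (mul_nonneg hs hx) (mul_nonneg ht hy)

lemma sArea_pos_of_mem_interior {a b p : EuclideanSpace ℝ (Fin 2)}
    {s : Set (EuclideanSpace ℝ (Fin 2))} (hab : a ≠ b) (hs : s ⊆ {x | 0 ≤ sArea a b x})
    (hp : p ∈ interior s) : 0 < sArea a b p := by
  -- `d` is `b - a` turned clockwise, pointing out of the half-plane.
  set d : EuclideanSpace ℝ (Fin 2) := !₂[b 1 - a 1, a 0 - b 0]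
  have hmove : ∀ t : ℝ, sArea a b (p + t • d) = sArea a b p - t * ‖b - a‖ ^ 2 / 2 := by
    intro t
    simp only [sArea, d, EuclideanSpace.norm_sq_eq, Fin.sum_univ_two, PiLp.add_apply,
      PiLp.smul_apply, PiLp.sub_apply, smul_eq_mul, Real.norm_eq_abs, sq_abs, cons_val_zero,
      cons_val_one, cons_val_fin_one]
    ring
  have hmoving : Filter.Tendsto (fun t : ℝ => p + t • d) (𝓝[>] 0) (𝓝 p) :=
    (Continuous.tendsto' (by fun_prop) 0 p (by simp)).mono_left nhdsWithin_le_nhds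
  have hnear : ∀ᶠ t in 𝓝[>] (0 : ℝ), p + t • d ∈ s :=
    hmoving.eventually (mem_interior_iff_mem_nhds.1 hp)
  obtain ⟨t, hts, ht⟩ := (hnear.and self_mem_nhdsWithin).exists
  have hmoved : 0 ≤ sArea a b (p + t • d) := hs hts
  have hba : 0 < ‖b - a‖ := norm_pos_iff.2 (sub_ne_zero.2 hab.symm)
  rw [hmove] at hmoved
  nlinarith [mul_pos (show 0 < t from ht) (pow_pos hba 2)]

namespace ConvexCCW

variable {v : Fin 4 → EuclideanSpace ℝ (Fin 2)}

lemma sArea_nonneg (hccw : ConvexCCW v) (i j : Fin 4) :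
    0 ≤ sArea (v i) (v (i + 1)) (v j) := by
  obtain ⟨k, rfl⟩ : ∃ k, j = i + k := ⟨j - i, by abel⟩
  obtain rfl | rfl | rfl | rfl : k = 0 ∨ k = 1 ∨ k = 2 ∨ k = 3 := by omega
  · rw [add_zero, sArea_rotate, sArea_self_left]
  · rw [← sArea_rotate, sArea_self_left]
  · exact (hccw i).le
  · have hwrap : i + 3 + 1 = i ∧ i + 3 + 2 = i + 1 := by revert i; decide
    have h := (hccw (i + 3)).le
    rwa [hwrap.1, hwrap.2, ← sArea_rotate] at h

lemma convexHull_subset (hccw : ConvexCCW v) (i : Fin 4) :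
    convexHull ℝ {v 0, v 1, v 2, v 3} ⊆ {x | 0 ≤ sArea (v i) (v (i + 1)) x} :=
  convexHull_min (by simp [Set.insert_subset_iff, hccw.sArea_nonneg])
    (convex_setOf_sArea_nonneg _ _)

lemma ne_succ (hccw : ConvexCCW v) (i : Fin 4) : v i ≠ v (i + 1) := fun h => by
  simpa [h, sArea_self_left] using hccw i

lemma sArea_pos_of_mem_interior (hccw : ConvexCCW v) {p : EuclideanSpace ℝ (Fin 2)}
    (hp : p ∈ interior (convexHull ℝ {v 0, v 1, v 2, v 3})) (i : Fin 4) :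
    0 < sArea p (v i) (v (i + 1)) := by
  rw [← sArea_rotate]
  exact _root_.sArea_pos_of_mem_interior (hccw.ne_succ i) (hccw.convexHull_subset i) hp

end ConvexCCW

lemma rho_mul_wWach {v : Fin 4 → EuclideanSpace ℝ (Fin 2)} {i : Fin 4}
    {p : EuclideanSpace ℝ (Fin 2)} (h₁ : 0 < sArea p (v (i - 1)) (v i))
    (h₂ : 0 < sArea p (v i) (v (i + 1))) :
    rho v i p * wWach v i p = 4 * sArea (v (i - 1)) (v i) (v (i + 1)) := by
  have hd₁ : hdist v (i - 1) p * ‖v i - v (i - 1)‖ = 2 * sArea p (v (i - 1)) (v i) := by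
    rw [hdist, sub_add_cancel, infDist_affineSpan_pair_mul_norm, sArea_rotate, abs_of_pos h₁]
  have hd₂ : hdist v i p * ‖v (i + 1) - v i‖ = 2 * sArea p (v i) (v (i + 1)) := by
    rw [hdist, infDist_affineSpan_pair_mul_norm, sArea_rotate, abs_of_pos h₂]
  calc rho v i p * wWach v i p
      = (hdist v (i - 1) p * ‖v i - v (i - 1)‖) * (hdist v i p * ‖v (i + 1) - v i‖) *
          sArea (v (i - 1)) (v i) (v (i + 1)) /
            (sArea p (v (i - 1)) (v i) * sArea p (v i) (v (i + 1))) := by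
        rw [rho, wWach, norm_sub_rev (v i) (v (i + 1))]; ring
    _ = 4 * sArea (v (i - 1)) (v i) (v (i + 1)) := by
        rw [hd₁, hd₂]; field_simp; ring

lemma sArea_sub_sArea_add_sArea_sub_sArea (a b c d : EuclideanSpace ℝ (Fin 2)) :
    sArea d a b - sArea a b c + sArea b c d - sArea c d a = 0 := by
  unfold sArea; ring

/-- For `p` in the interior of a convex quadrilateral
(counterclockwise order), the Wachspress coordinates satisfy
`ρ₁(p)φ₁(p) - ρ₂(p)φ₂(p) + ρ₃(p)φ₃(p) - ρ₄(p)φ₄(p) = 0`. -/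
theorem wachspress_moment_condition (v : Fin 4 → EuclideanSpace ℝ (Fin 2))
    (hccw : ConvexCCW v) (p : EuclideanSpace ℝ (Fin 2))
    (hp : p ∈ interior (convexHull ℝ {v 0, v 1, v 2, v 3})) :
    rho v 0 p * wach v 0 p - rho v 1 p * wach v 1 p +
      rho v 2 p * wach v 2 p - rho v 3 p * wach v 3 p = 0 := by
  have hS := hccw.sArea_pos_of_mem_interior hp
  have hterm : ∀ i, rho v i p * wach v i p = 4 * sArea (v (i - 1)) (v i) (v (i + 1)) /
      (wWach v 0 p + wWach v 1 p + wWach v 2 p + wWach v 3 p) := fun i => by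
    rw [wach, ← mul_div_assoc, rho_mul_wWach (by simpa using hS (i - 1)) (hS i)]
  simp only [hterm, Fin.reduceSub, Fin.reduceAdd, ← sub_div, ← add_div, ← mul_sub, ← mul_add,
    sArea_sub_sArea_add_sArea_sub_sArea, mul_zero, zero_div]
end

section
/- Let x1 = 0, x3 = 1, x2 ∈ (0,1) and x ∈ [0,1]. Then the 3×3 matrix with rows (1, 1, 1), (x1 − x, x2 − x, x3 − x) and (|x1 − x|, −|x2 − x|, |x3 − x|) is invertible, and the unique solution φ ∈ ℝ³ of the linear system with right-hand side (1, 0, 0) is componentwise nonnegative. -/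
/-!
Once `x` is placed between two adjacent nodes, the absolute values in the last row resolve, and
adding that row to (if `x ≤ x₂`) or subtracting it from (if `x₂ ≤ x`) the second row isolates the
node on the far side of `x`. The system then reduces to linear interpolation between the two
nodes adjacent to `x`, so its solution is the vector of values at `x` of the piecewise linear
hat functions of the three nodes; these are nonnegative, and the determinant,
`2 (x₃ - x)(x₂ - x₁)`, resp. `2 (x - x₁)(x₃ - x₂)`, is positive.
-/

open Matrix

def momentMatrix (x₁ x₂ x₃ x : ℝ) : Matrix (Fin 3) (Fin 3) ℝ :=
  !![1, 1, 1;
     x₁ - x, x₂ - x, x₃ - x;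
     |x₁ - x|, -|x₂ - x|, |x₃ - x|]

noncomputable def hatWeights (x₁ x₂ x₃ x : ℝ) : Fin 3 → ℝ :=
  if x ≤ x₂ then ![(x₂ - x) / (x₂ - x₁), (x - x₁) / (x₂ - x₁), 0]
  else ![0, (x₃ - x) / (x₃ - x₂), (x - x₂) / (x₃ - x₂)]

namespace momentMatrix

variable {x₁ x₂ x₃ x : ℝ}

theorem det_of_le (h₁ : x₁ ≤ x) (h₂ : x ≤ x₂) (h₃ : x ≤ x₃) :
    (momentMatrix x₁ x₂ x₃ x).det = 2 * (x₃ - x) * (x₂ - x₁) := by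
  rw [momentMatrix, det_fin_three]
  simp only [of_apply, cons_val_zero, cons_val_one, cons_val_two, head_cons, tail_cons]
  rw [abs_of_nonpos (sub_nonpos.2 h₁), abs_of_nonneg (sub_nonneg.2 h₂),
    abs_of_nonneg (sub_nonneg.2 h₃)]
  ring

theorem det_of_ge (h₁ : x₁ ≤ x) (h₂ : x₂ ≤ x) (h₃ : x ≤ x₃) :
    (momentMatrix x₁ x₂ x₃ x).det = 2 * (x - x₁) * (x₃ - x₂) := by
  rw [momentMatrix, det_fin_three]
  simp only [of_apply, cons_val_zero, cons_val_one, cons_val_two, head_cons, tail_cons]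
  rw [abs_of_nonpos (sub_nonpos.2 h₁), abs_of_nonpos (sub_nonpos.2 h₂),
    abs_of_nonneg (sub_nonneg.2 h₃)]
  ring

theorem det_pos (h₁₂ : x₁ < x₂) (h₂₃ : x₂ < x₃) (hx : x ∈ Set.Icc x₁ x₃) :
    0 < (momentMatrix x₁ x₂ x₃ x).det := by
  obtain ⟨h₁, h₃⟩ := hx
  rcases lt_or_ge x x₂ with h₂ | h₂
  · rw [det_of_le h₁ h₂.le h₃]
    have : 0 < x₃ - x := by linarith
    have : 0 < x₂ - x₁ := by linarith
    positivity
  · rw [det_of_ge h₁ h₂ h₃]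
    have : 0 < x - x₁ := by linarith
    have : 0 < x₃ - x₂ := by linarith
    positivity

theorem isUnit (h₁₂ : x₁ < x₂) (h₂₃ : x₂ < x₃) (hx : x ∈ Set.Icc x₁ x₃) :
    IsUnit (momentMatrix x₁ x₂ x₃ x) :=
  (isUnit_iff_isUnit_det _).2 (det_pos h₁₂ h₂₃ hx).ne'.isUnit

theorem mulVec_hatWeights (h₁₂ : x₁ < x₂) (h₂₃ : x₂ < x₃) (hx : x ∈ Set.Icc x₁ x₃) :
    momentMatrix x₁ x₂ x₃ x *ᵥ hatWeights x₁ x₂ x₃ x = ![1, 0, 0] := by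
  obtain ⟨h₁, h₃⟩ := hx
  have h₂₁ : x₂ - x₁ ≠ 0 := (sub_pos.2 h₁₂).ne'
  have h₃₂ : x₃ - x₂ ≠ 0 := (sub_pos.2 h₂₃).ne'
  rw [momentMatrix, abs_of_nonpos (sub_nonpos.2 h₁), abs_of_nonneg (sub_nonneg.2 h₃)]
  rcases le_or_gt x x₂ with h₂ | h₂
  · rw [hatWeights, if_pos h₂, abs_of_nonneg (sub_nonneg.2 h₂)]
    simp only [cons_mulVec, empty_mulVec, vec3_dotProduct']
    refine vec3_eq ?_ ?_ ?_ <;> field_simp <;> ring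
  · rw [hatWeights, if_neg h₂.not_ge, abs_of_neg (sub_neg.2 h₂)]
    simp only [cons_mulVec, empty_mulVec, vec3_dotProduct']
    refine vec3_eq ?_ ?_ ?_ <;> field_simp <;> ring

end momentMatrix

theorem hatWeights_nonneg {x₁ x₂ x₃ x : ℝ} (h₁₂ : x₁ < x₂) (h₂₃ : x₂ < x₃)
    (hx : x ∈ Set.Icc x₁ x₃) (i : Fin 3) : 0 ≤ hatWeights x₁ x₂ x₃ x i := by
  obtain ⟨h₁, h₃⟩ := hx
  rcases le_or_gt x x₂ with h₂ | h₂
  · have h₂₁ : 0 < x₂ - x₁ := sub_pos.2 h₁₂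
    rw [hatWeights, if_pos h₂]
    fin_cases i
    exacts [div_nonneg (sub_nonneg.2 h₂) h₂₁.le, div_nonneg (sub_nonneg.2 h₁) h₂₁.le, le_rfl]
  · have h₃₂ : 0 < x₃ - x₂ := sub_pos.2 h₂₃
    rw [hatWeights, if_neg h₂.not_ge]
    fin_cases i
    exacts [le_rfl, div_nonneg (sub_nonneg.2 h₃) h₃₂.le, div_nonneg (sub_nonneg.2 h₂.le) h₃₂.le]

/-- For nodes `x₁ = 0 < x₂ < x₃ = 1` and `x ∈ [0,1]`, the 3×3 moment
matrix with rows `(1,1,1)`, `(x₁-x, x₂-x, x₃-x)`, `(|x₁-x|, -|x₂-x|, |x₃-x|)` is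
invertible and the unique solution of the system with right-hand side `(1,0,0)` is
componentwise nonnegative. -/
theorem moment_1d_three_nodes (x2 x : ℝ) (hx2 : x2 ∈ Set.Ioo (0 : ℝ) 1)
    (hx : x ∈ Set.Icc (0 : ℝ) 1) :
    IsUnit (!![(1 : ℝ), 1, 1;
               0 - x, x2 - x, 1 - x;
               |0 - x|, -|x2 - x|, |1 - x|]) ∧
    ∀ φ : Fin 3 → ℝ,
      (!![(1 : ℝ), 1, 1;
          0 - x, x2 - x, 1 - x;
          |0 - x|, -|x2 - x|, |1 - x|]).mulVec φ = ![1, 0, 0] →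
      ∀ i, 0 ≤ φ i := by
  obtain ⟨h₁₂, h₂₃⟩ := hx2
  have hM := momentMatrix.isUnit h₁₂ h₂₃ hx
  refine ⟨hM, fun φ hφ i => ?_⟩
  have hφ_eq : φ = hatWeights 0 x2 1 x :=
    mulVec_injective_of_isUnit hM (hφ.trans (momentMatrix.mulVec_hatWeights h₁₂ h₂₃ hx).symm)
  exact hφ_eq ▸ hatWeights_nonneg h₁₂ h₂₃ hx i
end
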